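/- Fix y ∈ H and define, for real h near 0, the perturbed covariance operator Γ(h) = (1/(N+h)) (∑_{k∈U} Y_k ⊗ Y_k + h·(y ⊗ y)) − μ(h) ⊗ μ(h) with μ(h) = (1/(N+h)) (∑_{k∈U} Y_k + h·y). Suppose (v_ℓ)_{ℓ∈L} is a Hilbert basis of H consisting of eigenvectors of Γ, Γ v_ℓ = λ_ℓ v_ℓ, containing v_j and such that λ_ℓ ≠ λ_j for every ℓ ≠ j. Suppose h ↦ λ(h) ∈ ℝ and h ↦ w(h) ∈ H are defined near 0 with λ(0) = λ_j, w(0) = v_j, ‖w(h)‖ = 1 and Γ(h) w(h) = λ(h) w(h) for all h near 0, and that both λ and w are differentiable at 0. Then w′(0) = (1/N) ∑_{ℓ≠j} (⟨y − μ, v_j⟩ ⟨y − μ, v_ℓ⟩ / (λ_j − λ_ℓ)) v_ℓ; that is, the influence function of the eigenfunction v_j is Iv_j(M, y) = (1/N) ∑_{ℓ≠j} (⟨y − μ, v_j⟩ ⟨y − μ, v_ℓ⟩ / (λ_j − λ_ℓ)) v_ℓ. -/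

import Mathlib

open scoped RealInnerProductSpace
open Filter Topology

noncomputable section

/-- The rank-one operator `a ⊗ b : u ↦ ⟪a, u⟫ • b`. -/
def tens {H : Type*} [NormedAddCommGroup H] [InnerProductSpace ℝ H] (a b : H) :
    H →L[ℝ] H := (innerSL ℝ a).smulRight b

/-! Differentiating the eigen-equation `Γ(h) w(h) = λ(h) w(h)` at `h = 0` gives
`Γ'(0) v_j + Γ w'(0) = λ'(0) v_j + λ_j w'(0)`. Pairing with `v_ℓ`, `ℓ ≠ j`, and using the symmetry
of `Γ` yields `(λ_j - λ_ℓ) ⟪v_ℓ, w'(0)⟫ = ⟪v_ℓ, Γ'(0) v_j⟫`, while `‖w(h)‖ = 1` forces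
`⟪v_j, w'(0)⟫ = 0`. The influence function of the covariance operator is
`Γ'(0) = (1/N) ((y - μ) ⊗ (y - μ) - Γ)`, so `⟪v_ℓ, Γ'(0) v_j⟫ = (1/N) ⟪y - μ, v_j⟫ ⟪y - μ, v_ℓ⟫`,
and expanding `w'(0)` in the Hilbert basis gives the formula. -/

section RankOne

variable {H : Type*} [NormedAddCommGroup H] [InnerProductSpace ℝ H]

@[simp]
theorem tens_apply (a b u : H) : tens a b u = ⟪a, u⟫ • b := rfl

variable (H) in
def tensL : H →L[ℝ] H →L[ℝ] H →L[ℝ] H :=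
  (ContinuousLinearMap.smulRightL ℝ H H).comp (innerSL ℝ : H →L[ℝ] H →L[ℝ] ℝ)

@[simp]
theorem tensL_apply_apply (a b : H) : tensL H a b = tens a b := rfl

theorem isSymmetric_tens_self (a : H) : (tens a a : H →ₗ[ℝ] H).IsSymmetric :=
  InnerProductSpace.isSymmetric_rankOne_self a

theorem HasDerivAt.tens {f g : ℝ → H} {f' g' : H} {x : ℝ} (hf : HasDerivAt f f' x)
    (hg : HasDerivAt g g' x) :
    HasDerivAt (fun t => tens (f t) (g t)) (tens (f x) g' + tens f' (g x)) x :=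
  (tensL H).hasDerivAt_of_bilinear (fun _ => hf) (fun _ => hg)

end RankOne

theorem LinearMap.sum_apply_sub_mean_sub_mean {R ι E G : Type*} [CommRing R] [Fintype ι]
    [AddCommGroup E] [Module R E] [AddCommGroup G] [Module R G]
    (B : E →ₗ[R] E →ₗ[R] G) (Y : ι → E) {m : E} (hm : (Fintype.card ι : R) • m = ∑ k, Y k) :
    ∑ k, B (Y k - m) (Y k - m) = ∑ k, B (Y k) (Y k) - (Fintype.card ι : R) • B m m := by
  have hleft : ∑ k, B (Y k) m = (Fintype.card ι : R) • B m m := by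
    rw [← LinearMap.sum_apply, ← map_sum, ← hm, map_smul, LinearMap.smul_apply]
  have hright : ∑ k, B m (Y k) = (Fintype.card ι : R) • B m m := by
    rw [← map_sum, ← hm, map_smul]
  simp only [map_sub, LinearMap.sub_apply, Finset.sum_sub_distrib, hleft, hright,
    Finset.sum_const, Finset.card_univ, ← Nat.cast_smul_eq_nsmul R]
  module

theorem sum_tens_sub_mean {H : Type*} [NormedAddCommGroup H] [InnerProductSpace ℝ H]
    {N : ℕ} (Y : Fin N → H) {m : H} (hm : (N : ℝ) • m = ∑ k, Y k) :
    ∑ k, tens (Y k - m) (Y k - m) = ∑ k, tens (Y k) (Y k) - (N : ℝ) • tens m m := by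
  have := (tensL H).toLinearMap₁₂.sum_apply_sub_mean_sub_mean Y (by rwa [Fintype.card_fin])
  simpa only [ContinuousLinearMap.toLinearMap₁₂_apply_apply_apply, tensL_apply_apply,
    Fintype.card_fin] using this

theorem isSymmetric_smul_sum_tens_self {H ι : Type*} [NormedAddCommGroup H] [InnerProductSpace ℝ H]
    (c : ℝ) (s : Finset ι) (Z : ι → H) :
    ((c • ∑ k ∈ s, tens (Z k) (Z k) : H →L[ℝ] H) : H →ₗ[ℝ] H).IsSymmetric := by
  rw [ContinuousLinearMap.toLinearMap_smul, ContinuousLinearMap.toLinearMap_sum]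
  exact (LinearMap.isSymmetric_sum s fun k _ => isSymmetric_tens_self (Z k)).smul (by simp)

theorem hasDerivAt_inv_add_smul_add_smul {E : Type*} [NormedAddCommGroup E] [NormedSpace ℝ E]
    {N : ℝ} (hN : N ≠ 0) (T y : E) :
    HasDerivAt (fun h : ℝ => (N + h)⁻¹ • (T + h • y)) (N⁻¹ • (y - N⁻¹ • T)) 0 := by
  have hinv : HasDerivAt (fun h : ℝ => (N + h)⁻¹) (-1 / N ^ 2) 0 := by
    simpa using ((hasDerivAt_id (0 : ℝ)).const_add N).fun_inv (by simpa using hN)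
  have hlin : HasDerivAt (fun h : ℝ => T + h • y) y 0 := by
    simpa using ((hasDerivAt_id (0 : ℝ)).smul_const y).const_add T
  convert hinv.fun_smul hlin using 1
  simp only [add_zero, zero_smul, smul_sub, smul_smul]
  field_simp
  module

section Covariance

variable {H : Type*} [NormedAddCommGroup H] [InnerProductSpace ℝ H]
  {N : ℕ} (Y : Fin N → H) {μ : H} {Γ : H →L[ℝ] H}

theorem covariance_eq_sub_tens_mean (hN : (N : ℝ) ≠ 0) (hμ : μ = (N : ℝ)⁻¹ • ∑ k, Y k)
    (hΓ : Γ = (N : ℝ)⁻¹ • ∑ k, tens (Y k - μ) (Y k - μ)) :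
    Γ = (N : ℝ)⁻¹ • ∑ k, tens (Y k) (Y k) - tens μ μ := by
  have hm : (N : ℝ) • μ = ∑ k, Y k := by rw [hμ, smul_inv_smul₀ hN]
  rw [hΓ, sum_tens_sub_mean Y hm, smul_sub, inv_smul_smul₀ hN]

theorem contaminated_mean_zero (hμ : μ = (N : ℝ)⁻¹ • ∑ k, Y k) (y : H) {μf : ℝ → H}
    (hμf : ∀ h, μf h = ((N : ℝ) + h)⁻¹ • (∑ k, Y k + h • y)) : μf 0 = μ := by
  rw [hμf, hμ, add_zero, zero_smul, add_zero]

theorem contaminated_covariance_zero (hN : (N : ℝ) ≠ 0) (hμ : μ = (N : ℝ)⁻¹ • ∑ k, Y k)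
    (hΓ : Γ = (N : ℝ)⁻¹ • ∑ k, tens (Y k - μ) (Y k - μ)) (y : H)
    {μf : ℝ → H} (hμf : ∀ h, μf h = ((N : ℝ) + h)⁻¹ • (∑ k, Y k + h • y))
    {Γf : ℝ → H →L[ℝ] H}
    (hΓf : ∀ h, Γf h = ((N : ℝ) + h)⁻¹ • (∑ k, tens (Y k) (Y k) + h • tens y y)
        - tens (μf h) (μf h)) :
    Γf 0 = Γ := by
  rw [hΓf, contaminated_mean_zero Y hμ y hμf, covariance_eq_sub_tens_mean Y hN hμ hΓ, add_zero,
    zero_smul, add_zero]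

theorem hasDerivAt_contaminated_covariance (hN : (N : ℝ) ≠ 0) (hμ : μ = (N : ℝ)⁻¹ • ∑ k, Y k)
    (hΓ : Γ = (N : ℝ)⁻¹ • ∑ k, tens (Y k - μ) (Y k - μ)) (y : H)
    {μf : ℝ → H} (hμf : ∀ h, μf h = ((N : ℝ) + h)⁻¹ • (∑ k, Y k + h • y))
    {Γf : ℝ → H →L[ℝ] H}
    (hΓf : ∀ h, Γf h = ((N : ℝ) + h)⁻¹ • (∑ k, tens (Y k) (Y k) + h • tens y y)
        - tens (μf h) (μf h)) :
    HasDerivAt Γf ((N : ℝ)⁻¹ • (tens (y - μ) (y - μ) - Γ)) 0 := by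
  have hmean : HasDerivAt μf ((N : ℝ)⁻¹ • (y - μ)) 0 := by
    rw [funext hμf, hμ]
    exact hasDerivAt_inv_add_smul_add_smul hN _ y
  have hsecond := hasDerivAt_inv_add_smul_add_smul hN (∑ k, tens (Y k) (Y k)) (tens y y)
  rw [funext hΓf]
  refine (hsecond.sub (hmean.tens hmean)).congr_deriv ?_
  rw [covariance_eq_sub_tens_mean Y hN hμ hΓ, contaminated_mean_zero Y hμ y hμf]
  simp only [← tensL_apply_apply, map_sub, map_smul, sub_apply, smul_apply]
  module

end Covariance

section Perturbation

variable {H : Type*} [NormedAddCommGroup H] [InnerProductSpace ℝ H]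

theorem HasDerivAt.inner_eq_zero_of_eventually_norm_eq {w : ℝ → H} {w' : H} {x c : ℝ}
    (hw : HasDerivAt w w' x) (hnorm : ∀ᶠ t in 𝓝 x, ‖w t‖ = c) : ⟪w x, w'⟫ = 0 := by
  have hsq : (fun t => ⟪w t, w t⟫) =ᶠ[𝓝 x] fun _ => c ^ 2 :=
    hnorm.mono fun t ht => by simp only [real_inner_self_eq_norm_sq, ht]
  have h := (hw.inner ℝ hw).unique ((hasDerivAt_const x (c ^ 2)).congr_of_eventuallyEq hsq)
  linarith [real_inner_comm w' (w x)]

theorem eigen_equation_of_hasDerivAt {E : Type*} [NormedAddCommGroup E] [NormedSpace ℝ E]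
    {Γf : ℝ → E →L[ℝ] E} {Γ' : E →L[ℝ] E} {lamF : ℝ → ℝ} {lam' : ℝ} {w : ℝ → E} {w' : E} {x : ℝ}
    (hΓ : HasDerivAt Γf Γ' x) (hlam : HasDerivAt lamF lam' x) (hw : HasDerivAt w w' x)
    (heig : ∀ᶠ t in 𝓝 x, Γf t (w t) = lamF t • w t) :
    Γ' (w x) + Γf x w' = lamF x • w' + lam' • w x :=
  (hΓ.clm_apply hw).unique ((hlam.smul hw).congr_of_eventuallyEq heig)

theorem sub_mul_inner_eq_inner_of_isSymmetric {T : H →L[ℝ] H} (hT : (T : H →ₗ[ℝ] H).IsSymmetric)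
    {u v w' z : H} {a b c : ℝ} (hu : T u = a • u) (huv : ⟪u, v⟫ = 0)
    (h : z + T w' = b • w' + c • v) : (b - a) * ⟪u, w'⟫ = ⟪u, z⟫ := by
  have hTu : ⟪u, T w'⟫ = a * ⟪u, w'⟫ := by
    rw [← hT.apply_clm, hu, real_inner_smul_left]
  have h' := congrArg (fun x => ⟪u, x⟫) h
  simp only [inner_add_right, real_inner_smul_right, hTu, huv] at h'
  linarith

end Perturbation

theorem influence_function_of_eigenfunction_general
    {H : Type*} [NormedAddCommGroup H] [InnerProductSpace ℝ H]
    {L : Type*} [DecidableEq L]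
    (N : ℕ) (hN : 0 < N) (Y : Fin N → H)
    (μ : H) (hμ : μ = (N : ℝ)⁻¹ • ∑ k, Y k)
    (Γ : H →L[ℝ] H) (hΓ : Γ = (N : ℝ)⁻¹ • ∑ k, tens (Y k - μ) (Y k - μ))
    (y : H)
    (μf : ℝ → H) (hμf : ∀ h, μf h = ((N : ℝ) + h)⁻¹ • (∑ k, Y k + h • y))
    (Γf : ℝ → H →L[ℝ] H)
    (hΓf : ∀ h, Γf h = ((N : ℝ) + h)⁻¹ • (∑ k, tens (Y k) (Y k) + h • tens y y)
        - tens (μf h) (μf h))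
    (v : HilbertBasis L ℝ H) (lam : L → ℝ)
    (heig : ∀ ℓ, Γ (v ℓ) = lam ℓ • v ℓ)
    (j : L) (hdistinct : ∀ ℓ, ℓ ≠ j → lam ℓ ≠ lam j)
    (lamF : ℝ → ℝ) (w : ℝ → H)
    (hlam0 : lamF 0 = lam j) (hw0 : w 0 = v j)
    (hnear : ∀ᶠ h in 𝓝 (0 : ℝ), ‖w h‖ = 1 ∧ Γf h (w h) = lamF h • w h)
    (hlamdiff : DifferentiableAt ℝ lamF 0)
    (w' : H) (hw' : HasDerivAt w w' 0) :
    w' = (N : ℝ)⁻¹ • ∑' ℓ, (if ℓ = j then (0 : ℝ) else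
        ⟪y - μ, v j⟫ * ⟪y - μ, v ℓ⟫ / (lam j - lam ℓ)) • v ℓ := by
  have hN' : (N : ℝ) ≠ 0 := by exact_mod_cast hN.ne'
  have hΓ0 : Γf 0 = Γ := contaminated_covariance_zero Y hN' hμ hΓ y hμf hΓf
  have hsymm : (Γ : H →ₗ[ℝ] H).IsSymmetric := hΓ ▸ isSymmetric_smul_sum_tens_self _ _ _
  have hderiv := eigen_equation_of_hasDerivAt
    (hasDerivAt_contaminated_covariance Y hN' hμ hΓ y hμf hΓf) hlamdiff.hasDerivAt hw'
    (hnear.mono fun _ h => h.2)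
  rw [hΓ0, hw0, hlam0] at hderiv
  have hcoef : ∀ ℓ, ⟪v ℓ, w'⟫ = (N : ℝ)⁻¹ * (if ℓ = j then (0 : ℝ) else
      ⟪y - μ, v j⟫ * ⟪y - μ, v ℓ⟫ / (lam j - lam ℓ)) := by
    intro ℓ
    split_ifs with hℓ
    · subst hℓ
      simpa [hw0] using hw'.inner_eq_zero_of_eventually_norm_eq (hnear.mono fun _ h => h.1)
    · have horth : ⟪v ℓ, v j⟫ = 0 := v.orthonormal.inner_eq_zero hℓ
      have hgap : lam j - lam ℓ ≠ 0 := sub_ne_zero.2 (hdistinct ℓ hℓ).symm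
      have h := sub_mul_inner_eq_inner_of_isSymmetric hsymm (heig ℓ) horth hderiv
      simp only [smul_apply, sub_apply, tens_apply, heig j, inner_smul_right, inner_sub_right,
        horth, mul_zero, sub_zero, real_inner_comm (y - μ) (v ℓ)] at h
      rw [mul_div_assoc', ← h, mul_div_cancel_left₀ _ hgap]
  calc w' = ∑' ℓ, ⟪v ℓ, w'⟫ • v ℓ := by
        simpa only [v.repr_apply_apply] using (v.hasSum_repr w').tsum_eq.symm
    _ = _ := by simp_rw [hcoef, mul_smul]; exact tsum_const_smul'' _

/-- Let `(v_ℓ)_{ℓ∈L}` be a Hilbert basis of eigenvectors of `Γ` (`Γ v_ℓ = λ_ℓ v_ℓ`)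
containing `v_j`, with `λ_ℓ ≠ λ_j` for `ℓ ≠ j`.  If `h ↦ λ(h)` and `h ↦ w(h)` satisfy
`λ(0) = λ_j`, `w(0) = v_j`, `‖w(h)‖ = 1` and `Γ(h) w(h) = λ(h) w(h)` for `h` near `0`, with
`λ` and `w` differentiable at `0`, then
`w′(0) = (1/N) ∑_{ℓ≠j} (⟪y − μ, v_j⟫ ⟪y − μ, v_ℓ⟫/(λ_j − λ_ℓ)) v_ℓ`: this is the influence
function of the eigenfunction `v_j`. -/
theorem influence_function_of_eigenfunction
    {H : Type*} [NormedAddCommGroup H] [InnerProductSpace ℝ H] [CompleteSpace H]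
    {L : Type*} [DecidableEq L]
    (N : ℕ) (hN : 0 < N) (Y : Fin N → H)
    (μ : H) (hμ : μ = (N : ℝ)⁻¹ • ∑ k, Y k)
    (Γ : H →L[ℝ] H) (hΓ : Γ = (N : ℝ)⁻¹ • ∑ k, tens (Y k - μ) (Y k - μ))
    (y : H)
    (μf : ℝ → H) (hμf : ∀ h, μf h = ((N : ℝ) + h)⁻¹ • (∑ k, Y k + h • y))
    (Γf : ℝ → H →L[ℝ] H)
    (hΓf : ∀ h, Γf h = ((N : ℝ) + h)⁻¹ • (∑ k, tens (Y k) (Y k) + h • tens y y)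
        - tens (μf h) (μf h))
    (v : HilbertBasis L ℝ H) (lam : L → ℝ)
    (heig : ∀ ℓ, Γ (v ℓ) = lam ℓ • v ℓ)
    (j : L) (hdistinct : ∀ ℓ, ℓ ≠ j → lam ℓ ≠ lam j)
    (lamF : ℝ → ℝ) (w : ℝ → H)
    (hlam0 : lamF 0 = lam j) (hw0 : w 0 = v j)
    (hnear : ∀ᶠ h in 𝓝 (0 : ℝ), ‖w h‖ = 1 ∧ Γf h (w h) = lamF h • w h)
    (hlamdiff : DifferentiableAt ℝ lamF 0)
    (w' : H) (hw' : HasDerivAt w w' 0) :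
    w' = (N : ℝ)⁻¹ • ∑' ℓ, (if ℓ = j then (0 : ℝ) else
        ⟪y - μ, v j⟫ * ⟪y - μ, v ℓ⟫ / (lam j - lam ℓ)) • v ℓ :=
  influence_function_of_eigenfunction_general N hN Y μ hμ Γ hΓ y μf hμf Γf hΓf v lam heig j
    hdistinct lamF w hlam0 hw0 hnear hlamdiff w' hw'
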